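/- arXiv:1904.07018 — 3 statements merged into one kernel-verified Lean document; each statement's English description precedes it below -/
import Mathlib

section
/- Suppose the objective F is strictly improved by completing an assignment, i.e. for every assignment X, every i₀ ∈ U, j₀ ∈ M and k₀ ∈ K_{i₀} with x_{i₀j₀}^{k₀} = 0, the assignment X' obtained from X by setting x_{i₀j₀}^{k₀} = 1 satisfies F(X') > F(X). If P1 admits at least one feasible solution, then the set of optimal solutions of P2 coincides exactly with the set of optimal solutions of P1: an assignment X maximizes F over the P2-feasible assignments if and only if it maximizes F over the P1-feasible assignments. -/
open Finset

/-- An assignment is `{0,1}`-valued. -/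
def IsAssign {U M K : Type*} (X : U → M → K → ℕ) : Prop :=
  ∀ i j k, X i j k ≤ 1

/-- The load of server `j` under assignment `X`. -/
def load {U M K : Type*} [Fintype U] (Ki : U → Finset K) (lam : ℝ)
    (X : U → M → K → ℕ) (j : M) : ℝ :=
  lam * ∑ i, ∑ k ∈ Ki i, (X i j k : ℝ)

/-- P1-feasibility: binary assignment, capacity constraints, and equality
constraints `∑ j, x_{ij}^k = 1` for all `i` and `k ∈ K_i`. -/
def P1Feas {U M K : Type*} [Fintype U] [Fintype M] (Ki : U → Finset K)
    (lam : ℝ) (c : M → ℝ) (X : U → M → K → ℕ) : Prop :=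
  IsAssign X ∧ (∀ j, load Ki lam X j ≤ c j) ∧
    ∀ i, ∀ k ∈ Ki i, ∑ j, X i j k = 1

/-- P2-feasibility: binary assignment, capacity constraints, and relaxed
constraints `∑ j, x_{ij}^k ≤ 1` for all `i` and `k ∈ K_i`. -/
def P2Feas {U M K : Type*} [Fintype U] [Fintype M] (Ki : U → Finset K)
    (lam : ℝ) (c : M → ℝ) (X : U → M → K → ℕ) : Prop :=
  IsAssign X ∧ (∀ j, load Ki lam X j ≤ c j) ∧
    ∀ i, ∀ k ∈ Ki i, ∑ j, X i j k ≤ 1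

/-! If a P2-feasible `Y` leaves a request `(i, k)` unserved, it serves fewer requests in total
than a P1-feasible `Z`, so some server `j` carries fewer requests under `Y` than under `Z`, and
since `λ₀ > 0` it has room for one more. Routing `(i, k)` to `j` keeps `Y` P2-feasible and strictly
increases `F`. Hence a P2-optimum serves every request, i.e. is P1-feasible, and iterating the step
dominates every P2-feasible assignment by a P1-feasible one. -/

section AssignTo

variable {U M K : Type*} [DecidableEq U] [DecidableEq M] [DecidableEq K]

def assignTo (X : U → M → K → ℕ) (i₀ : U) (j₀ : M) (k₀ : K) : U → M → K → ℕ :=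
  fun i j k => if i = i₀ ∧ j = j₀ ∧ k = k₀ then 1 else X i j k

def ImprovesOnAssign (Ki : U → Finset K) (F : (U → M → K → ℕ) → ℝ) : Prop :=
  ∀ X, IsAssign X → ∀ i₀ j₀ k₀, k₀ ∈ Ki i₀ → X i₀ j₀ k₀ = 0 → F X < F (assignTo X i₀ j₀ k₀)

theorem IsAssign.assignTo {X : U → M → K → ℕ} (hX : IsAssign X) (i₀ : U) (j₀ : M) (k₀ : K) :
    IsAssign (assignTo X i₀ j₀ k₀) := fun i j k => by
  unfold _root_.assignTo
  split_ifs
  exacts [le_rfl, hX i j k]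

theorem assignTo_apply_of_eq_zero {X : U → M → K → ℕ} {i₀ : U} {j₀ : M} {k₀ : K}
    (h : X i₀ j₀ k₀ = 0) (i : U) (j : M) (k : K) :
    assignTo X i₀ j₀ k₀ i j k = X i j k + if i = i₀ ∧ j = j₀ ∧ k = k₀ then 1 else 0 := by
  unfold assignTo
  split_ifs with hijk
  · obtain ⟨rfl, rfl, rfl⟩ := hijk
    simp [h]
  · rfl

theorem sum_assignTo_of_eq_zero [Fintype M] {X : U → M → K → ℕ} {i₀ : U} {j₀ : M} {k₀ : K}
    (h : X i₀ j₀ k₀ = 0) (i : U) (k : K) :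
    ∑ j, assignTo X i₀ j₀ k₀ i j k = ∑ j, X i j k + if i = i₀ ∧ k = k₀ then 1 else 0 := by
  simp only [assignTo_apply_of_eq_zero h, sum_add_distrib]
  by_cases hik : i = i₀ ∧ k = k₀
  · simp [hik]
  · simpa [hik] using not_and.mp hik

end AssignTo

section Feasibility

variable {U M K : Type*} [Fintype U]

def colCount (Ki : U → Finset K) (X : U → M → K → ℕ) (j : M) : ℕ :=
  ∑ i, ∑ k ∈ Ki i, X i j k

theorem load_eq_mul_colCount (Ki : U → Finset K) (lam : ℝ) (X : U → M → K → ℕ) (j : M) :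
    load Ki lam X j = lam * colCount Ki X j := by
  simp [load, colCount]

theorem colCount_assignTo_of_eq_zero [DecidableEq U] [DecidableEq M] [DecidableEq K]
    {Ki : U → Finset K} {X : U → M → K → ℕ} {i₀ : U} {j₀ : M} {k₀ : K}
    (hk₀ : k₀ ∈ Ki i₀) (h : X i₀ j₀ k₀ = 0) (j : M) :
    colCount Ki (assignTo X i₀ j₀ k₀) j = colCount Ki X j + if j = j₀ then 1 else 0 := by
  simp only [colCount, assignTo_apply_of_eq_zero h, sum_add_distrib, add_right_inj]
  by_cases hj : j = j₀
  · rw [sum_eq_single i₀ (fun i _ hi => by simp [hi]) (by simp)]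
    simp [hj, hk₀]
  · simp [hj]

theorem load_assignTo_of_eq_zero [DecidableEq U] [DecidableEq M] [DecidableEq K]
    {Ki : U → Finset K} {lam : ℝ} {X : U → M → K → ℕ} {i₀ : U} {j₀ : M} {k₀ : K}
    (hk₀ : k₀ ∈ Ki i₀) (h : X i₀ j₀ k₀ = 0) (j : M) :
    load Ki lam (assignTo X i₀ j₀ k₀) j = load Ki lam X j + if j = j₀ then lam else 0 := by
  rw [load_eq_mul_colCount, load_eq_mul_colCount, colCount_assignTo_of_eq_zero hk₀ h]
  split_ifs <;> push_cast <;> ring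

variable [Fintype M]

theorem sum_sigma_sum_eq_sum_colCount (Ki : U → Finset K) (X : U → M → K → ℕ) :
    ∑ p ∈ univ.sigma Ki, ∑ j, X p.1 j p.2 = ∑ j, colCount Ki X j := by
  simp only [sum_sigma, colCount]
  rw [sum_comm]
  exact sum_congr rfl fun i _ => sum_comm

theorem exists_colCount_lt {Ki : U → Finset K} {Y Z : U → M → K → ℕ}
    (hle : ∀ i, ∀ k ∈ Ki i, ∑ j, Y i j k ≤ ∑ j, Z i j k)
    {i₀ : U} {k₀ : K} (hk₀ : k₀ ∈ Ki i₀) (hlt : ∑ j, Y i₀ j k₀ < ∑ j, Z i₀ j k₀) :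
    ∃ j, colCount Ki Y j < colCount Ki Z j := by
  obtain ⟨j, -, hj⟩ : ∃ j ∈ univ, colCount Ki Y j < colCount Ki Z j := by
    apply exists_lt_of_sum_lt
    rw [← sum_sigma_sum_eq_sum_colCount, ← sum_sigma_sum_eq_sum_colCount]
    exact sum_lt_sum (fun p hp => hle p.1 p.2 (mem_sigma.1 hp).2)
      ⟨⟨i₀, k₀⟩, mem_sigma.2 ⟨mem_univ _, hk₀⟩, hlt⟩
  exact ⟨j, hj⟩

def unserved (Ki : U → Finset K) (X : U → M → K → ℕ) : Finset (Σ _ : U, K) :=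
  (univ.sigma Ki).filter fun p => ∑ j, X p.1 j p.2 = 0

theorem unserved_assignTo_ssubset [DecidableEq U] [DecidableEq M] [DecidableEq K]
    {Ki : U → Finset K} {X : U → M → K → ℕ} {i₀ : U} {j₀ : M} {k₀ : K}
    (hk₀ : k₀ ∈ Ki i₀) (h₀ : ∑ j, X i₀ j k₀ = 0) :
    unserved Ki (assignTo X i₀ j₀ k₀) ⊂ unserved Ki X := by
  have h : X i₀ j₀ k₀ = 0 := sum_eq_zero_iff.1 h₀ j₀ (mem_univ _)
  refine (ssubset_iff_of_subset fun p hp => ?_).2 ⟨⟨i₀, k₀⟩, ?_, ?_⟩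
  · simp only [unserved, mem_filter, sum_assignTo_of_eq_zero h, Nat.add_eq_zero_iff] at hp ⊢
    exact ⟨hp.1, hp.2.1⟩
  · exact mem_filter.2 ⟨mem_sigma.2 ⟨mem_univ _, hk₀⟩, h₀⟩
  · simp [unserved, sum_assignTo_of_eq_zero h]

variable {Ki : U → Finset K} {lam : ℝ} {c : M → ℝ}

theorem P1Feas.toP2Feas {X : U → M → K → ℕ} (hX : P1Feas Ki lam c X) : P2Feas Ki lam c X :=
  ⟨hX.1, hX.2.1, fun i k hk => (hX.2.2 i k hk).le⟩

theorem P2Feas.toP1Feas {X : U → M → K → ℕ} (hX : P2Feas Ki lam c X)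
    (hserved : ∀ i, ∀ k ∈ Ki i, ∑ j, X i j k ≠ 0) : P1Feas Ki lam c X :=
  ⟨hX.1, hX.2.1, fun i k hk =>
    le_antisymm (hX.2.2 i k hk) (Nat.one_le_iff_ne_zero.2 (hserved i k hk))⟩

variable [DecidableEq U] [DecidableEq M] [DecidableEq K]

theorem P2Feas.assignTo {Y : U → M → K → ℕ} {i₀ : U} {j₀ : M} {k₀ : K}
    (hY : P2Feas Ki lam c Y) (hk₀ : k₀ ∈ Ki i₀) (h₀ : ∑ j, Y i₀ j k₀ = 0)
    (hroom : load Ki lam Y j₀ + lam ≤ c j₀) : P2Feas Ki lam c (assignTo Y i₀ j₀ k₀) := by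
  have h : Y i₀ j₀ k₀ = 0 := sum_eq_zero_iff.1 h₀ j₀ (mem_univ _)
  refine ⟨hY.1.assignTo i₀ j₀ k₀, fun j => ?_, fun i k hk => ?_⟩
  · rw [load_assignTo_of_eq_zero hk₀ h]
    split_ifs with hj
    · exact hj ▸ hroom
    · simpa using hY.2.1 j
  · rw [sum_assignTo_of_eq_zero h]
    split_ifs with hik
    · obtain ⟨rfl, rfl⟩ := hik
      simp [h₀]
    · simpa using hY.2.2 i k hk

theorem P2Feas.exists_gt_of_unserved (hlam : 0 ≤ lam) {F : (U → M → K → ℕ) → ℝ}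
    (hF : ImprovesOnAssign Ki F) {Z Y : U → M → K → ℕ} (hZ : P1Feas Ki lam c Z)
    (hY : P2Feas Ki lam c Y) {i₀ : U} {k₀ : K} (hk₀ : k₀ ∈ Ki i₀) (h₀ : ∑ j, Y i₀ j k₀ = 0) :
    ∃ Y', P2Feas Ki lam c Y' ∧ F Y < F Y' ∧ unserved Ki Y' ⊂ unserved Ki Y := by
  obtain ⟨j₀, hj₀⟩ : ∃ j, colCount Ki Y j < colCount Ki Z j :=
    exists_colCount_lt (fun i k hk => (hY.2.2 i k hk).trans_eq (hZ.2.2 i k hk).symm) hk₀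
      (by rw [h₀, hZ.2.2 i₀ k₀ hk₀]; exact one_pos)
  have hroom : load Ki lam Y j₀ + lam ≤ c j₀ :=
    calc load Ki lam Y j₀ + lam = lam * (colCount Ki Y j₀ + 1 : ℕ) := by
          rw [load_eq_mul_colCount]; push_cast; ring
      _ ≤ lam * colCount Ki Z j₀ := by gcongr; exact hj₀
      _ = load Ki lam Z j₀ := (load_eq_mul_colCount Ki lam Z j₀).symm
      _ ≤ c j₀ := hZ.2.1 j₀
  exact ⟨_, hY.assignTo hk₀ h₀ hroom,
    hF Y hY.1 i₀ j₀ k₀ hk₀ (sum_eq_zero_iff.1 h₀ j₀ (mem_univ _)), unserved_assignTo_ssubset hk₀ h₀⟩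

theorem P2Feas.exists_P1Feas_ge (hlam : 0 ≤ lam) {F : (U → M → K → ℕ) → ℝ}
    (hF : ImprovesOnAssign Ki F) {Z Y : U → M → K → ℕ} (hZ : P1Feas Ki lam c Z)
    (hY : P2Feas Ki lam c Y) : ∃ Y', P1Feas Ki lam c Y' ∧ F Y ≤ F Y' := by
  by_cases hserved : ∀ i, ∀ k ∈ Ki i, ∑ j, Y i j k ≠ 0
  · exact ⟨Y, hY.toP1Feas hserved, le_rfl⟩
  push Not at hserved
  obtain ⟨i₀, k₀, hk₀, h₀⟩ := hserved
  obtain ⟨Y', hY', hlt, hfewer⟩ := hY.exists_gt_of_unserved hlam hF hZ hk₀ h₀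
  obtain ⟨Y'', hY'', hle⟩ := hY'.exists_P1Feas_ge hlam hF hZ
  exact ⟨Y'', hY'', hlt.le.trans hle⟩
termination_by (unserved Ki Y).card
decreasing_by exact card_lt_card hfewer

end Feasibility

theorem P2_optimal_iff_P1_optimal_general
    {U M K : Type*} [Fintype U] [Fintype M]
    [DecidableEq U] [DecidableEq M] [DecidableEq K]
    (Ki : U → Finset K) (lam : ℝ) (hlam : 0 < lam) (c : M → ℝ)
    (F : (U → M → K → ℕ) → ℝ)
    (himp : ∀ (X : U → M → K → ℕ), IsAssign X →
      ∀ i₀ j₀ k₀, k₀ ∈ Ki i₀ → X i₀ j₀ k₀ = 0 →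
        F (fun i j k => if i = i₀ ∧ j = j₀ ∧ k = k₀ then 1 else X i j k) > F X)
    (hfeas : ∃ X, P1Feas Ki lam c X) :
    ∀ X : U → M → K → ℕ,
      (P2Feas Ki lam c X ∧ ∀ Y, P2Feas Ki lam c Y → F Y ≤ F X) ↔
      (P1Feas Ki lam c X ∧ ∀ Y, P1Feas Ki lam c Y → F Y ≤ F X) := by
  obtain ⟨Z, hZ⟩ := hfeas
  have hF : ImprovesOnAssign Ki F := himp
  intro X
  constructor
  · rintro ⟨hX, hXopt⟩
    refine ⟨hX.toP1Feas fun i k hk h₀ => ?_, fun Y hY => hXopt Y hY.toP2Feas⟩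
    obtain ⟨Y, hY, hlt, -⟩ := hX.exists_gt_of_unserved hlam.le hF hZ hk h₀
    exact (hXopt Y hY).not_gt hlt
  · rintro ⟨hX, hXopt⟩
    refine ⟨hX.toP2Feas, fun Y hY => ?_⟩
    obtain ⟨Y', hY', hle⟩ := hY.exists_P1Feas_ge hlam.le hF hZ
    exact hle.trans (hXopt Y' hY')

/-- Theorem 1: if the objective strictly improves when completing an assignment
and P1 has a feasible solution, then the optimal solutions of P2 are exactly
those of P1. -/
theorem P2_optimal_iff_P1_optimal
    {U M K : Type*} [Fintype U] [Fintype M] [Fintype K]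
    [DecidableEq U] [DecidableEq M] [DecidableEq K]
    (Ki : U → Finset K) (lam : ℝ) (hlam : 0 < lam) (c : M → ℝ)
    (F : (U → M → K → ℕ) → ℝ)
    (himp : ∀ (X : U → M → K → ℕ), IsAssign X →
      ∀ i₀ j₀ k₀, k₀ ∈ Ki i₀ → X i₀ j₀ k₀ = 0 →
        F (fun i j k => if i = i₀ ∧ j = j₀ ∧ k = k₀ then 1 else X i j k) > F X)
    (hfeas : ∃ X, P1Feas Ki lam c X) :
    ∀ X : U → M → K → ℕ,
      (P2Feas Ki lam c X ∧ ∀ Y, P2Feas Ki lam c Y → F Y ≤ F X) ↔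
      (P1Feas Ki lam c X ∧ ∀ Y, P1Feas Ki lam c Y → F Y ≤ F X) :=
  P2_optimal_iff_P1_optimal_general Ki lam hlam c F himp hfeas
end

section
/- Suppose the objective F is strictly improved by completing an assignment, i.e. for every assignment X, every i₀ ∈ U, j₀ ∈ M and k₀ ∈ K_{i₀} with x_{i₀j₀}^{k₀} = 0, the assignment X' obtained from X by setting x_{i₀j₀}^{k₀} = 1 satisfies F(X') > F(X). If P1 admits at least one feasible solution, then every optimal solution X of P2 satisfies all the equality constraints of P1, i.e. ∑_{j∈M} x_{ij}^k = 1 for every i ∈ U and every k ∈ K_i; in particular X is P1-feasible. -/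
open Finset

/-!
If some request `(i₀, k₀)` were left unserved by a P2-optimal `X`, then `X` would serve strictly
fewer requests in total than a P1-feasible `Z`, which serves every request exactly once. Some
server `j₀` therefore serves more requests under `Z` than under `X`, so it has room for one more
request under `X`. Serving `(i₀, k₀)` at `j₀` keeps P2-feasibility and strictly increases `F`,
contradicting optimality.
-/

section Assignment

variable {U M K : Type*}

def served [Fintype U] (Ki : U → Finset K) (X : U → M → K → ℕ) (j : M) : ℕ :=
  ∑ i, ∑ k ∈ Ki i, X i j k

def serveAt [DecidableEq U] [DecidableEq M] [DecidableEq K] (X : U → M → K → ℕ)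
    (i₀ : U) (j₀ : M) (k₀ : K) : U → M → K → ℕ :=
  fun i j k => if i = i₀ ∧ j = j₀ ∧ k = k₀ then 1 else X i j k

theorem load_eq_mul_served [Fintype U] (Ki : U → Finset K) (lam : ℝ) (X : U → M → K → ℕ)
    (j : M) : load Ki lam X j = lam * served Ki X j := by
  simp only [load, served, Nat.cast_sum]

theorem load_add_le_of_served_lt [Fintype U] {Ki : U → Finset K} {lam : ℝ} (hlam : 0 ≤ lam)
    {X Z : U → M → K → ℕ} {j : M} (h : served Ki X j < served Ki Z j) :
    load Ki lam X j + lam ≤ load Ki lam Z j := by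
  have h' : (served Ki X j : ℝ) + 1 ≤ served Ki Z j := by exact_mod_cast h
  rw [load_eq_mul_served, load_eq_mul_served]
  nlinarith

theorem sum_served_eq [Fintype U] [Fintype M] (Ki : U → Finset K) (X : U → M → K → ℕ) :
    ∑ j, served Ki X j = ∑ i, ∑ k ∈ Ki i, ∑ j, X i j k := by
  simp only [served]
  rw [Finset.sum_comm]
  exact Finset.sum_congr rfl fun i _ => Finset.sum_comm

theorem sum_served_lt_of_lt [Fintype U] [Fintype M] {Ki : U → Finset K}
    {X Z : U → M → K → ℕ} (hle : ∀ i, ∀ k ∈ Ki i, ∑ j, X i j k ≤ ∑ j, Z i j k)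
    {i₀ : U} {k₀ : K} (hk₀ : k₀ ∈ Ki i₀) (hlt : ∑ j, X i₀ j k₀ < ∑ j, Z i₀ j k₀) :
    ∑ j, served Ki X j < ∑ j, served Ki Z j := by
  rw [sum_served_eq, sum_served_eq]
  exact Finset.sum_lt_sum (fun i _ => Finset.sum_le_sum (hle i))
    ⟨i₀, Finset.mem_univ _, Finset.sum_lt_sum (hle i₀) ⟨k₀, hk₀, hlt⟩⟩

variable [DecidableEq U] [DecidableEq M] [DecidableEq K]

theorem IsAssign.serveAt {X : U → M → K → ℕ} (hX : IsAssign X) (i₀ : U) (j₀ : M) (k₀ : K) :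
    IsAssign (serveAt X i₀ j₀ k₀) := by
  intro i j k
  unfold _root_.serveAt
  split_ifs
  exacts [le_rfl, hX i j k]

theorem serveAt_apply {X : U → M → K → ℕ} {i₀ : U} {j₀ : M} {k₀ : K} (h0 : X i₀ j₀ k₀ = 0)
    (i : U) (j : M) (k : K) :
    serveAt X i₀ j₀ k₀ i j k = X i j k + if i = i₀ ∧ j = j₀ ∧ k = k₀ then 1 else 0 := by
  unfold serveAt
  split_ifs with h
  · obtain ⟨rfl, rfl, rfl⟩ := h
    rw [h0]
  · rw [add_zero]

theorem served_serveAt [Fintype U] {Ki : U → Finset K} {X : U → M → K → ℕ} {i₀ : U} {j₀ : M}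
    {k₀ : K} (hk₀ : k₀ ∈ Ki i₀) (h0 : X i₀ j₀ k₀ = 0) (j : M) :
    served Ki (serveAt X i₀ j₀ k₀) j = served Ki X j + if j = j₀ then 1 else 0 := by
  simp only [served, serveAt_apply h0, Finset.sum_add_distrib]
  congr 1
  split_ifs with hj <;> simp [hj, ite_and, hk₀]

theorem load_serveAt [Fintype U] {Ki : U → Finset K} {lam : ℝ} {X : U → M → K → ℕ} {i₀ : U}
    {j₀ : M} {k₀ : K} (hk₀ : k₀ ∈ Ki i₀) (h0 : X i₀ j₀ k₀ = 0) (j : M) :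
    load Ki lam (serveAt X i₀ j₀ k₀) j = load Ki lam X j + if j = j₀ then lam else 0 := by
  rw [load_eq_mul_served, load_eq_mul_served, served_serveAt hk₀ h0]
  split_ifs <;> push_cast <;> ring

theorem sum_serveAt [Fintype M] {X : U → M → K → ℕ} {i₀ : U} {j₀ : M} {k₀ : K}
    (h0 : X i₀ j₀ k₀ = 0) (i : U) (k : K) :
    ∑ j, serveAt X i₀ j₀ k₀ i j k = ∑ j, X i j k + if i = i₀ ∧ k = k₀ then 1 else 0 := by
  simp only [serveAt_apply h0, Finset.sum_add_distrib]
  congr 1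
  split_ifs with h <;> simp_all [ite_and]

theorem P2Feas.serveAt [Fintype U] [Fintype M] {Ki : U → Finset K} {lam : ℝ} {c : M → ℝ}
    {X : U → M → K → ℕ} (hX : P2Feas Ki lam c X) {i₀ : U} {j₀ : M} {k₀ : K}
    (hk₀ : k₀ ∈ Ki i₀) (hunserved : ∑ j, X i₀ j k₀ = 0)
    (hroom : load Ki lam X j₀ + lam ≤ c j₀) :
    P2Feas Ki lam c (serveAt X i₀ j₀ k₀) := by
  obtain ⟨hXa, hXc, hXle⟩ := hX
  have h0 : X i₀ j₀ k₀ = 0 := Finset.sum_eq_zero_iff.mp hunserved j₀ (Finset.mem_univ _)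
  refine ⟨hXa.serveAt i₀ j₀ k₀, fun j => ?_, fun i k hk => ?_⟩
  · rw [load_serveAt hk₀ h0]
    split_ifs with hj
    · exact hj ▸ hroom
    · simpa using hXc j
  · rw [sum_serveAt h0]
    split_ifs with h
    · obtain ⟨rfl, rfl⟩ := h
      rw [hunserved]
    · exact hXle i k hk

end Assignment

theorem P2_optimal_satisfies_equalities_general
    {U M K : Type*} [Fintype U] [Fintype M]
    [DecidableEq U] [DecidableEq M] [DecidableEq K]
    (Ki : U → Finset K) (lam : ℝ) (hlam : 0 < lam) (c : M → ℝ)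
    (F : (U → M → K → ℕ) → ℝ)
    (himp : ∀ (X : U → M → K → ℕ), IsAssign X →
      ∀ i₀ j₀ k₀, k₀ ∈ Ki i₀ → X i₀ j₀ k₀ = 0 →
        F (fun i j k => if i = i₀ ∧ j = j₀ ∧ k = k₀ then 1 else X i j k) > F X)
    (hfeas : ∃ X, P1Feas Ki lam c X)
    (X : U → M → K → ℕ)
    (hopt : P2Feas Ki lam c X ∧ ∀ Y, P2Feas Ki lam c Y → F Y ≤ F X) :
    (∀ i, ∀ k ∈ Ki i, ∑ j, X i j k = 1) ∧ P1Feas Ki lam c X := by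
  obtain ⟨hX, hmax⟩ := hopt
  obtain ⟨Z, -, hZc, hZeq⟩ := hfeas
  suffices heq : ∀ i, ∀ k ∈ Ki i, ∑ j, X i j k = 1 from ⟨heq, hX.1, hX.2.1, heq⟩
  by_contra! ⟨i₀, k₀, hk₀, hne⟩
  have hunserved : ∑ j, X i₀ j k₀ = 0 := by have := hX.2.2 i₀ k₀ hk₀; omega
  obtain ⟨j₀, -, hj₀⟩ := Finset.exists_lt_of_sum_lt <|
    sum_served_lt_of_lt (fun i k hk => (hX.2.2 i k hk).trans (hZeq i k hk).ge) hk₀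
      (by rw [hunserved, hZeq i₀ k₀ hk₀]; exact one_pos)
  have hroom := (load_add_le_of_served_lt hlam.le hj₀).trans (hZc j₀)
  have h0 : X i₀ j₀ k₀ = 0 := Finset.sum_eq_zero_iff.mp hunserved j₀ (Finset.mem_univ _)
  exact (himp X hX.1 i₀ j₀ k₀ hk₀ h0).not_ge (hmax _ (hX.serveAt hk₀ hunserved hroom))

/-- Theorem 2: under the strict-improvement hypothesis, if P1 is feasible then
every P2-optimal solution satisfies all equality constraints of P1, hence is
P1-feasible. -/
theorem P2_optimal_satisfies_equalities
    {U M K : Type*} [Fintype U] [Fintype M] [Fintype K]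
    [DecidableEq U] [DecidableEq M] [DecidableEq K]
    (Ki : U → Finset K) (lam : ℝ) (hlam : 0 < lam) (c : M → ℝ)
    (F : (U → M → K → ℕ) → ℝ)
    (himp : ∀ (X : U → M → K → ℕ), IsAssign X →
      ∀ i₀ j₀ k₀, k₀ ∈ Ki i₀ → X i₀ j₀ k₀ = 0 →
        F (fun i j k => if i = i₀ ∧ j = j₀ ∧ k = k₀ then 1 else X i j k) > F X)
    (hfeas : ∃ X, P1Feas Ki lam c X)
    (X : U → M → K → ℕ)
    (hopt : P2Feas Ki lam c X ∧ ∀ Y, P2Feas Ki lam c Y → F Y ≤ F X) :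
    (∀ i, ∀ k ∈ Ki i, ∑ j, X i j k = 1) ∧ P1Feas Ki lam c X :=
  P2_optimal_satisfies_equalities_general Ki lam hlam c F himp hfeas X hopt
end

section
/- Suppose P1 admits at least one feasible solution. If X is a P2-feasible assignment for which some request is unserved, i.e. there exist i₀ ∈ U and k₀ ∈ K_{i₀} with ∑_{j∈M} x_{i₀j}^{k₀} = 0, then some server has strictly slack capacity: there exists j₀ ∈ M with L_{j₀}(X) < c_{j₀}. -/
open Finset

/-!
Summing the loads over all servers counts every served request once, so the total load of an
assignment is `lam` times the number of requests it serves. A P1-feasible `Y` serves every request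
and `X` misses one, hence `∑ⱼ L_j(X) < ∑ⱼ L_j(Y) ≤ ∑ⱼ c_j`, and some summand on the left is
below the corresponding capacity.
-/

section Served

variable {U M K : Type*} [Fintype U] [Fintype M]

/-- For a P2-feasible `X`, the number of served requests. -/
def numServed (Ki : U → Finset K) (X : U → M → K → ℕ) : ℕ :=
  ∑ i, ∑ k ∈ Ki i, ∑ j, X i j k

theorem sum_load_eq_mul_numServed (Ki : U → Finset K) (lam : ℝ) (X : U → M → K → ℕ) :
    ∑ j, load Ki lam X j = lam * numServed Ki X := by
  simp only [load, numServed, ← mul_sum, Nat.cast_sum]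
  rw [sum_comm]
  congr 1
  refine sum_congr rfl fun i _ => ?_
  exact sum_comm

theorem numServed_lt_of_unserved {Ki : U → Finset K} {X Y : U → M → K → ℕ}
    (hX : ∀ i, ∀ k ∈ Ki i, ∑ j, X i j k ≤ 1) (hY : ∀ i, ∀ k ∈ Ki i, ∑ j, Y i j k = 1)
    {i₀ : U} {k₀ : K} (hk₀ : k₀ ∈ Ki i₀) (hun : ∑ j, X i₀ j k₀ = 0) :
    numServed Ki X < numServed Ki Y := by
  have hle : ∀ i, ∀ k ∈ Ki i, ∑ j, X i j k ≤ ∑ j, Y i j k := fun i k hk =>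
    (hX i k hk).trans (hY i k hk).ge
  refine sum_lt_sum (fun i _ => sum_le_sum (hle i)) ⟨i₀, mem_univ _, ?_⟩
  refine sum_lt_sum (hle i₀) ⟨k₀, hk₀, ?_⟩
  rw [hun, hY i₀ k₀ hk₀]
  exact Nat.zero_lt_one

end Served

theorem exists_slack_server_of_unserved_general
    {U M K : Type*} [Fintype U] [Fintype M]
    (Ki : U → Finset K) (lam : ℝ) (hlam : 0 < lam) (c : M → ℝ)
    (hfeas : ∃ X, P1Feas Ki lam c X)
    (X : U → M → K → ℕ) (hX : P2Feas Ki lam c X)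
    (i₀ : U) (k₀ : K) (hk₀ : k₀ ∈ Ki i₀) (hun : ∑ j, X i₀ j k₀ = 0) :
    ∃ j₀, load Ki lam X j₀ < c j₀ := by
  obtain ⟨Y, -, hYc, hY⟩ := hfeas
  have hlt : ∑ j, load Ki lam X j < ∑ j, c j :=
    calc ∑ j, load Ki lam X j = lam * numServed Ki X := sum_load_eq_mul_numServed Ki lam X
      _ < lam * numServed Ki Y := by
        gcongr
        exact numServed_lt_of_unserved hX.2.2 hY hk₀ hun
      _ = ∑ j, load Ki lam Y j := (sum_load_eq_mul_numServed Ki lam Y).symm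
      _ ≤ ∑ j, c j := sum_le_sum fun j _ => hYc j
  obtain ⟨j₀, -, hj₀⟩ := exists_lt_of_sum_lt hlt
  exact ⟨j₀, hj₀⟩

/-- if P1 is feasible and a P2-feasible assignment leaves some
request unserved, then some server has strictly slack capacity. -/
theorem exists_slack_server_of_unserved
    {U M K : Type*} [Fintype U] [Fintype M] [Fintype K]
    (Ki : U → Finset K) (lam : ℝ) (hlam : 0 < lam) (c : M → ℝ)
    (hfeas : ∃ X, P1Feas Ki lam c X)
    (X : U → M → K → ℕ) (hX : P2Feas Ki lam c X)
    (i₀ : U) (k₀ : K) (hk₀ : k₀ ∈ Ki i₀) (hun : ∑ j, X i₀ j k₀ = 0) :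
    ∃ j₀, load Ki lam X j₀ < c j₀ :=
  exists_slack_server_of_unserved_general Ki lam hlam c hfeas X hX i₀ k₀ hk₀ hun
end
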